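/- In the pipeline scheduling model, if γ ≥ α + β, then the immediate-send strategy (every batch a single token) achieves completion time γ·N + α + β, and this equals OPT(N); i.e., immediate-send is optimal when per-token generation time dominates per-batch communication time. -/
import Mathlib


/-- Pipeline fold step: state is (tokens generated so far, communication finish time).
Generating a batch of size `b` finishes at time `γ * (tokens so far + b)`; its
communication starts at the max of the previous communication finish and that
generation finish, and takes `α + β * b`. -/
def pipeStep (α β γ : ℝ) (s : ℕ × ℝ) (b : ℕ) : ℕ × ℝ :=
  (s.1 + b, max s.2 (γ * ((s.1 + b : ℕ) : ℝ)) + α + β * (b : ℝ))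

/-- Completion time of a batching strategy given by its list of batch sizes. -/
def complTime (α β γ : ℝ) (l : List ℕ) : ℝ :=
  (l.foldl (pipeStep α β γ) (0, 0)).2

/-- A list of batch sizes is a batching of the first `N` tokens: all batches
nonempty and sizes summing to `N`. -/
def IsBatching (l : List ℕ) (N : ℕ) : Prop :=
  (∀ b ∈ l, 0 < b) ∧ l.sum = N

/-- The set of completion times achievable by batchings of the first `N` tokens. -/
def Times (α β γ : ℝ) (N : ℕ) : Set ℝ :=
  {t : ℝ | ∃ l : List ℕ, IsBatching l N ∧ t = complTime α β γ l}

lemma pipe_fst (α β γ : ℝ) (l : List ℕ) (s : ℕ × ℝ) :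
    (l.foldl (pipeStep α β γ) s).1 = s.1 + l.sum := by
  induction l generalizing s with
  | nil => simp
  | cons a t ih => simp [ih, pipeStep, Nat.add_assoc]

lemma pipe_nonneg (α β γ : ℝ) (hα : 0 ≤ α) (hβ : 0 ≤ β) (hγ : 0 ≤ γ)
    (l : List ℕ) (s : ℕ × ℝ) (hs : 0 ≤ s.2) :
    0 ≤ (l.foldl (pipeStep α β γ) s).2 := by
  induction l generalizing s with
  | nil => exact hs
  | cons a t ih =>
    refine ih _ ?_
    have h1 : s.2 ≤ max s.2 (γ * ((s.1 + a : ℕ) : ℝ)) := le_max_left _ _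
    have h2 : 0 ≤ β * (a : ℝ) := mul_nonneg hβ (Nat.cast_nonneg a)
    simp only [pipeStep]
    nlinarith

lemma replicate_compl (α β γ : ℝ) (hα : 0 ≤ α) (hβ : 0 ≤ β) (hγ : 0 ≤ γ)
    (hdom : α + β ≤ γ) :
    ∀ k : ℕ, 1 ≤ k →
      (List.replicate k 1).foldl (pipeStep α β γ) (0, 0) = (k, γ * (k : ℝ) + α + β) := by
  intro k hk
  induction k with
  | zero => omega
  | succ n ih =>
    rcases Nat.eq_or_lt_of_le hk with h | h
    · -- n + 1 = 1, so n = 0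
      have hn : n = 0 := by omega
      subst hn
      simp [pipeStep, complTime, max_eq_right hγ, mul_one]
    · have hn : 1 ≤ n := by omega
      rw [List.replicate_succ', List.foldl_append, ih hn]
      simp only [List.foldl_cons, List.foldl_nil, pipeStep]
      have hmax : max (γ * (n : ℝ) + α + β) (γ * ((n + 1 : ℕ) : ℝ))
          = γ * ((n + 1 : ℕ) : ℝ) := by
        apply max_eq_right
        push_cast
        nlinarith
      rw [hmax]
      push_cast
      ring_nf

lemma lower_bound (α β γ : ℝ) (hα : 0 ≤ α) (hβ : 0 ≤ β) (hγ : 0 ≤ γ)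
    (N : ℕ) (hN : 1 ≤ N) (l : List ℕ) (hl : IsBatching l N) :
    γ * (N : ℝ) + α + β ≤ complTime α β γ l := by
  obtain ⟨hpos, hsum⟩ := hl
  have hne : l ≠ [] := by
    rintro rfl; simp at hsum; omega
  obtain h | ⟨l', b, rfl⟩ := l.eq_nil_or_concat'
  · exact absurd h hne
  have hb : 1 ≤ b := hpos b (by simp)
  unfold complTime
  rw [List.foldl_append]
  set s := l'.foldl (pipeStep α β γ) (0, 0) with hs
  have hs2 : 0 ≤ s.2 := pipe_nonneg α β γ hα hβ hγ l' _ (le_refl 0)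
  have hfst : s.1 + b = N := by
    rw [hs, pipe_fst]
    simpa using hsum
  simp only [List.foldl_cons, List.foldl_nil, pipeStep]
  rw [hfst]
  have h1 : γ * (N : ℝ) ≤ max s.2 (γ * (N : ℝ)) := le_max_right _ _
  have h2 : β ≤ β * (b : ℝ) := by
    have : (1:ℝ) ≤ (b:ℝ) := by exact_mod_cast hb
    nlinarith
  linarith

/-- if `γ ≥ α + β` then immediate-send (all batches of size one)
achieves completion time `γ·N + α + β`, which equals `OPT(N)`. -/
theorem immediate_send_optimal (α β γ : ℝ) (hα : 0 ≤ α) (hβ : 0 ≤ β) (hγ : 0 ≤ γ)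
    (hdom : α + β ≤ γ) (N : ℕ) (hN : 1 ≤ N)
    (OPT : ℝ) (hOPT : IsLeast (Times α β γ N) OPT) :
    complTime α β γ (List.replicate N 1) = γ * (N : ℝ) + α + β ∧
    OPT = γ * (N : ℝ) + α + β := by
  have hach : complTime α β γ (List.replicate N 1) = γ * (N : ℝ) + α + β := by
    unfold complTime
    rw [replicate_compl α β γ hα hβ hγ hdom N hN]
  refine ⟨hach, ?_⟩
  obtain ⟨hmem, hlb⟩ := hOPT
  have hle : OPT ≤ γ * (N : ℝ) + α + β := by
    refine hach ▸ hlb ⟨List.replicate N 1, ⟨?_, by simp⟩, rfl⟩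
    intro b hb; simp at hb; omega
  obtain ⟨l, hl, rfl⟩ := hmem
  have := lower_bound α β γ hα hβ hγ N hN l hl
  linarith
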